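/- Let H be Hermitian on a finite-dimensional space, A an operator, and f : ℝ → ℂ integrable. Define the filtered operator Â_f := (1/√(2π)) ∫_{−∞}^{∞} e^{iHt} A e^{−iHt} f(t) dt. Then Â_f = Σ_ν A_ν f̂(−ν), where f̂(ν) := (1/√(2π)) ∫ e^{−iνt} f(t) dt is the Fourier transform of f and the sum runs over Bohr frequencies of H. -/

import Mathlib

open Matrix Finset Complex NormedSpace MeasureTheory

attribute [local instance] Matrix.frobeniusNormedAddCommGroup Matrix.frobeniusNormedSpace

noncomputable section

/-- The rank-one operator `|ψ i⟩⟨ψ i|`. -/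
def ketbra {d : ℕ} (ψ : Fin d → Fin d → ℂ) (i : Fin d) : Matrix (Fin d) (Fin d) ℂ :=
  Matrix.vecMulVec (ψ i) (star (ψ i))

/-- The set of Bohr frequencies `{E i - E j}` of the Hamiltonian. -/
def bohrSet {d : ℕ} (E : Fin d → ℝ) : Finset ℝ :=
  Finset.image (fun p : Fin d × Fin d => E p.1 - E p.2) Finset.univ

/-- The Bohr-frequency component `A_ν = ∑_{E i - E j = ν} |ψ i⟩⟨ψ i| A |ψ j⟩⟨ψ j|`. -/
def bohrComp {d : ℕ} (ψ : Fin d → Fin d → ℂ) (E : Fin d → ℝ)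
    (A : Matrix (Fin d) (Fin d) ℂ) (ν : ℝ) : Matrix (Fin d) (Fin d) ℂ :=
  ∑ i, ∑ j, if E i - E j = ν then ketbra ψ i * A * ketbra ψ j else 0

/-- Heisenberg evolution `A(t) = e^{iHt} A e^{-iHt}`. -/
def heis {d : ℕ} (H A : Matrix (Fin d) (Fin d) ℂ) (t : ℝ) : Matrix (Fin d) (Fin d) ℂ :=
  NormedSpace.exp ((I * (t : ℂ)) • H) * A * NormedSpace.exp ((-(I * (t : ℂ))) • H)

/-- The filtered operator `Â_f = (1/√(2π)) ∫ A(t) f(t) dt`. -/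
def filtered {d : ℕ} (H A : Matrix (Fin d) (Fin d) ℂ) (f : ℝ → ℂ) :
    Matrix (Fin d) (Fin d) ℂ :=
  ((Real.sqrt (2 * Real.pi) : ℂ))⁻¹ • ∫ t : ℝ, f t • heis H A t

/-- The Fourier transform `f̂(ν) = (1/√(2π)) ∫ e^{-iνt} f(t) dt`. -/
def fourier' (f : ℝ → ℂ) (ν : ℝ) : ℂ :=
  ((Real.sqrt (2 * Real.pi) : ℂ))⁻¹ * ∫ t : ℝ, Complex.exp (-I * (ν : ℂ) * (t : ℂ)) * f t

/-!
The projections `P i = |ψ i⟩⟨ψ i|` form a complete family of orthogonal idempotents, so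
`c ↦ ∑ i, c i • P i` is a continuous algebra map out of `ι → ℂ` and therefore commutes with the
exponential: `e^{iHt} = ∑ i, e^{i E i t} P i`. Hence `A(t) = ∑ i j, e^{i (E i - E j) t} P i A P j`,
and integrating against `f` term by term turns each phase into `f̂(-(E i - E j))`. Grouping the
pairs `(i, j)` by their Bohr frequency `ν = E i - E j` gives `∑ ν, f̂(-ν) A_ν`.
-/

namespace CompleteOrthogonalIdempotents

variable {ι 𝔸 : Type*} [Fintype ι] {e : ι → 𝔸}

def piAlgHom (𝕜 : Type*) [CommSemiring 𝕜] [Semiring 𝔸] [Algebra 𝕜 𝔸]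
    (he : CompleteOrthogonalIdempotents e) : (ι → 𝕜) →ₐ[𝕜] 𝔸 :=
  AlgHom.ofLinearMap (Fintype.linearCombination 𝕜 e)
    (by simp [Fintype.linearCombination_apply, he.complete])
    (fun c c' => by
      classical
      simp only [Fintype.linearCombination_apply, Pi.mul_apply, Finset.sum_mul, Finset.mul_sum,
        smul_mul_smul_comm, he.mul_eq, smul_ite, smul_zero, Finset.sum_ite_eq', Finset.mem_univ,
        if_true, mul_smul])

theorem piAlgHom_apply (𝕜 : Type*) [CommSemiring 𝕜] [Semiring 𝔸] [Algebra 𝕜 𝔸]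
    (he : CompleteOrthogonalIdempotents e) (c : ι → 𝕜) :
    he.piAlgHom 𝕜 c = ∑ i, c i • e i :=
  Fintype.linearCombination_apply 𝕜 e c

theorem exp_sum_smul [NormedRing 𝔸] [NormedAlgebra ℂ 𝔸] [Algebra ℚ 𝔸] [CompleteSpace 𝔸]
    (he : CompleteOrthogonalIdempotents e) (c : ι → ℂ) :
    exp (∑ i, c i • e i) = ∑ i, Complex.exp (c i) • e i := by
  have hcont : Continuous (he.piAlgHom ℂ) :=
    LinearMap.continuous_of_finiteDimensional (he.piAlgHom ℂ).toLinearMap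
  rw [← piAlgHom_apply ℂ he, ← map_exp _ hcont, piAlgHom_apply]
  simp [Complex.exp_eq_exp_ℂ]

end CompleteOrthogonalIdempotents

theorem sum_smul_mul_mul_sum_smul {ι 𝕜 𝔸 : Type*} [Fintype ι] [CommSemiring 𝕜] [Semiring 𝔸]
    [Algebra 𝕜 𝔸] (a b : ι → 𝕜) (e : ι → 𝔸) (x : 𝔸) :
    (∑ i, a i • e i) * x * (∑ j, b j • e j)
      = ∑ p : ι × ι, (a p.1 * b p.2) • (e p.1 * x * e p.2) := by
  simp only [Finset.sum_mul, Finset.mul_sum, Fintype.sum_prod_type, smul_mul_assoc,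
    mul_smul_comm, Finset.smul_sum, smul_smul]
  rw [Finset.sum_comm]
  simp only [mul_comm (b _)]

theorem integral_sum_smul_const {α ι 𝕜 E : Type*} [MeasurableSpace α] {μ : Measure α} [Fintype ι]
    [RCLike 𝕜] [NormedAddCommGroup E] [NormedSpace ℝ E] [NormedSpace 𝕜 E] [CompleteSpace E]
    {g : ι → α → 𝕜} (hg : ∀ i, Integrable (g i) μ) (v : ι → E) :
    ∫ a, ∑ i, g i a • v i ∂μ = ∑ i, (∫ a, g i a ∂μ) • v i := by
  rw [integral_finsetSum _ fun i _ => (hg i).smul_const (v i)]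
  exact Finset.sum_congr rfl fun i _ => integral_smul_const _ _

theorem integrable_mul_exp_I_mul {μ : Measure ℝ} {f : ℝ → ℂ} (hf : Integrable f μ) (ν : ℝ) :
    Integrable (fun t : ℝ => f t * Complex.exp (I * ν * t)) μ := by
  refine hf.mul_bdd (c := 1) (by fun_prop) (Filter.Eventually.of_forall fun t => ?_)
  simp [Complex.norm_exp]

theorem fourier'_neg (f : ℝ → ℂ) (ν : ℝ) :
    fourier' f (-ν)
      = ((Real.sqrt (2 * Real.pi) : ℂ))⁻¹ * ∫ t : ℝ, f t * Complex.exp (I * ν * t) := by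
  simp only [fourier', ofReal_neg, mul_neg, neg_mul, neg_neg, mul_comm (f _)]

section Heisenberg

variable {d : ℕ} {ι : Type*} [Fintype ι] {P : ι → Matrix (Fin d) (Fin d) ℂ}

theorem heis_eq_sum (hP : CompleteOrthogonalIdempotents P) (E : ι → ℝ)
    (A : Matrix (Fin d) (Fin d) ℂ) (t : ℝ) :
    heis (∑ i, (E i : ℂ) • P i) A t
      = ∑ p : ι × ι, Complex.exp (I * ↑(E p.1 - E p.2) * t) • (P p.1 * A * P p.2) := by
  -- `exp` only sees the topology; a submultiplicative norm is needed to apply `exp_sum_smul`.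
  let := Matrix.frobeniusNormedRing (α := ℂ) (m := Fin d)
  let := Matrix.frobeniusNormedAlgebra (R := ℂ) (α := ℂ) (m := Fin d)
  have hexp (s : ℂ) : exp (s • ∑ i, (E i : ℂ) • P i) = ∑ i, Complex.exp (s * E i) • P i := by
    simp only [Finset.smul_sum, smul_smul]
    exact hP.exp_sum_smul _
  rw [heis, hexp, hexp, sum_smul_mul_mul_sum_smul]
  congr! 2 with p
  rw [← Complex.exp_add]
  push_cast
  ring_nf

theorem filtered_eq_sum (hP : CompleteOrthogonalIdempotents P) (E : ι → ℝ)
    (A : Matrix (Fin d) (Fin d) ℂ) {f : ℝ → ℂ} (hf : Integrable f) :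
    filtered (∑ i, (E i : ℂ) • P i) A f
      = ∑ p : ι × ι, fourier' f (-(E p.1 - E p.2)) • (P p.1 * A * P p.2) := by
  simp only [filtered, heis_eq_sum hP, Finset.smul_sum, smul_smul]
  rw [integral_sum_smul_const fun p => integrable_mul_exp_I_mul hf _, Finset.smul_sum]
  simp only [smul_smul, fourier'_neg]

end Heisenberg

theorem completeOrthogonalIdempotents_ketbra {d : ℕ} {ψ : Fin d → Fin d → ℂ}
    (horth : ∀ i j, star (ψ i) ⬝ᵥ ψ j = if i = j then (1 : ℂ) else 0)
    (hcomplete : ∑ i, ketbra ψ i = 1) :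
    CompleteOrthogonalIdempotents (ketbra ψ) := by
  refine ⟨OrthogonalIdempotents.iff_mul_eq.2 fun i j => ?_, hcomplete⟩
  rw [ketbra, ketbra, vecMulVec_mul_vecMulVec, horth]
  split_ifs with hij
  · rw [one_smul, hij]
  · rw [zero_smul, vecMulVec_zero]

theorem sum_bohrSet_smul_bohrComp {d : ℕ} (ψ : Fin d → Fin d → ℂ) (E : Fin d → ℝ)
    (A : Matrix (Fin d) (Fin d) ℂ) (g : ℝ → ℂ) :
    ∑ ν ∈ bohrSet E, g ν • bohrComp ψ E A ν
      = ∑ p : Fin d × Fin d, g (E p.1 - E p.2) • (ketbra ψ p.1 * A * ketbra ψ p.2) := by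
  simp only [bohrComp, Finset.smul_sum, smul_ite, smul_zero, Fintype.sum_prod_type]
  rw [Finset.sum_comm]
  refine Finset.sum_congr rfl fun i _ => ?_
  rw [Finset.sum_comm]
  refine Finset.sum_congr rfl fun j _ => ?_
  have hmem : E i - E j ∈ bohrSet E := Finset.mem_image_of_mem _ (Finset.mem_univ (i, j))
  rw [Finset.sum_ite_eq, if_pos hmem]

/-- `Â_f = ∑_ν A_ν f̂(−ν)`. -/
theorem filtered_eq_bohr_sum {d : ℕ} (ψ : Fin d → Fin d → ℂ) (E : Fin d → ℝ)
    (H A : Matrix (Fin d) (Fin d) ℂ) (f : ℝ → ℂ)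
    (horth : ∀ i j, star (ψ i) ⬝ᵥ ψ j = if i = j then (1 : ℂ) else 0)
    (hcomplete : ∑ i, ketbra ψ i = 1)
    (hH : H = ∑ i, (E i : ℂ) • ketbra ψ i)
    (hf : Integrable f) :
    filtered H A f = ∑ ν ∈ bohrSet E, fourier' f (-ν) • bohrComp ψ E A ν := by
  rw [hH, filtered_eq_sum (completeOrthogonalIdempotents_ketbra horth hcomplete) E A hf,
    sum_bohrSet_smul_bohrComp]

end
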